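/- arXiv:2205.03933 — 2 statements merged into one kernel-verified Lean document; each statement's English description precedes it below -/
import Mathlib

section
/- Let Σ be a finite alphabet of size q ≥ 2 and let n, L_min, L_over be positive integers with n ≥ L_min > L_over ≥ 1. If x ∈ rf_{L_over}(n) is an L_over-repeat-free string and y ∈ Σ^n is any string such that T_{L_min}^{L_over}(x) ∩ T_{L_min}^{L_over}(y) ≠ ∅ (i.e., some multiset is simultaneously an (L_min, L_over)-trace of x and of y), then x = y. In other words, any L_over-repeat-free string is uniquely reconstructible from any single (L_min, L_over)-trace of it. -/
/-- The `ℓ`-substring of `x` at location `i`: `(x_i, x_{i+1}, …, x_{i+ℓ-1})`. -/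
def substr {α : Type*} (x : List α) (i ℓ : ℕ) : List α := (x.drop i).take ℓ

/-- `x` is `ℓ`-repeat-free: no `ℓ`-substring occurs at two distinct locations. -/
def RepeatFree {α : Type*} (ℓ : ℕ) (x : List α) : Prop :=
  ∀ i j : ℕ, i < j → j + ℓ ≤ x.length → substr x i ℓ ≠ substr x j ℓ

/-- `T` is an `(Lmin, Lover)`-trace of `x`: a multiset of substrings of `x` taken at
strictly increasing locations, starting at location `0`, ending flush with the end of `x`,
each of length at least `Lmin`, and with consecutive substrings overlapping in at least
`Lover` positions. -/
def IsTrace {α : Type*} (Lmin Lover : ℕ) (x : List α) (T : Multiset (List α)) : Prop :=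
  ∃ P : List (ℕ × ℕ),
    P ≠ [] ∧
    (∀ p ∈ P, Lmin ≤ p.2 ∧ p.1 + p.2 ≤ x.length) ∧
    P.Chain' (fun a b => a.1 < b.1 ∧ b.1 + Lover ≤ a.1 + a.2) ∧
    (∃ p ∈ P.head?, p.1 = 0) ∧
    (∃ p ∈ P.getLast?, p.1 + p.2 = x.length) ∧
    T = ↑(P.map fun p => substr x p.1 p.2)

/-- The `(Lmin, Lover)`-trace spectrum of `x`: the set of all its `(Lmin, Lover)`-traces. -/
def traceSpectrum {α : Type*} (Lmin Lover : ℕ) (x : List α) : Set (Multiset (List α)) :=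
  {T | IsTrace Lmin Lover x T}

/-!
Every piece of a trace of `y` is also a piece of the trace of `x`, hence occurs somewhere in `x`.
Consecutive pieces of `y` share a substring of length `Lover`, and since `x` is `Lover`-repeat-free
that shared substring has only one location in `x`; so all pieces of `y` occur in `x` shifted by a
common offset. The first piece starts at `0` and the last ends at `n`, and `x` has length `n`, so
the offset is `0`. As the pieces cover `y`, `y` agrees with `x` everywhere.
-/

section Substrings

variable {α : Type*}

theorem length_substr {x : List α} {i ℓ : ℕ} (h : i + ℓ ≤ x.length) :
    (substr x i ℓ).length = ℓ := by
  simp only [substr, List.length_take, List.length_drop]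
  omega

theorem substr_substr (x : List α) {i ℓ d m : ℕ} (h : d + m ≤ ℓ) :
    substr (substr x i ℓ) d m = substr x (i + d) m := by
  simp only [substr, List.drop_take, List.drop_drop, List.take_take]
  congr 2
  omega

theorem getElem?_substr (x : List α) {i ℓ k : ℕ} (hk : k < ℓ) :
    (substr x i ℓ)[k]? = x[i + k]? := by
  simp [substr, hk]

theorem RepeatFree.eq_of_substr_eq {L : ℕ} {x : List α} (hrf : RepeatFree L x) {i j : ℕ}
    (hi : i + L ≤ x.length) (hj : j + L ≤ x.length) (h : substr x i L = substr x j L) :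
    i = j := by
  rcases lt_trichotomy i j with hij | hij | hij
  · exact absurd h (hrf i j hij hj)
  · exact hij
  · exact absurd h.symm (hrf j i hij hi)

/-- The `L` characters of `y` at `j` occur in `x` both at `s` and at `r + (j - i)`, and
repeat-freeness identifies the two locations. -/
theorem RepeatFree.add_eq_add_of_overlap {L : ℕ} {x y : List α} (hrf : RepeatFree L x)
    {i j ℓ m r s : ℕ} (hij : i ≤ j) (hoverlap : j + L ≤ i + ℓ) (hLm : L ≤ m)
    (hr : r + ℓ ≤ x.length) (hs : s + m ≤ x.length)
    (hi : substr y i ℓ = substr x r ℓ) (hj : substr y j m = substr x s m) :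
    s + i = r + j := by
  have hvia_i : substr y j L = substr x (r + (j - i)) L := by
    rw [← substr_substr x (by omega : j - i + L ≤ ℓ), ← hi, substr_substr y (by omega),
      Nat.add_sub_cancel' hij]
  have hvia_j : substr y j L = substr x s L := by
    simpa only [substr_substr _ (by omega : 0 + L ≤ m), Nat.add_zero] using
      congrArg (substr · 0 L) hj
  have := hrf.eq_of_substr_eq (by omega) (by omega) (hvia_i.symm.trans hvia_j)
  omega

end Substrings

section Chains

variable {α : Type*}

theorem RepeatFree.add_eq_add_of_isChain {L : ℕ} {x y : List α} (hrf : RepeatFree L x)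
    {Q : List (ℕ × ℕ)} (f : ℕ × ℕ → ℕ) (hL : ∀ p ∈ Q, L ≤ p.2)
    (hchain : Q.IsChain fun a b => a.1 ≤ b.1 ∧ b.1 + L ≤ a.1 + a.2)
    (hf : ∀ p ∈ Q, f p + p.2 ≤ x.length ∧ substr y p.1 p.2 = substr x (f p) p.2)
    {a : ℕ × ℕ} (ha : a ∈ Q.head?) :
    ∀ p ∈ Q, f p + a.1 = f a + p.1 := by
  have hcarry : Q.IsChain fun b c => f b + a.1 = f a + b.1 → f c + a.1 = f a + c.1 :=
    hchain.imp_of_mem_imp fun b c hb hc ⟨hbc, hoverlap⟩ => by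
      have := hrf.add_eq_add_of_overlap hbc hoverlap (hL c hc) (hf b hb).1 (hf c hc).1
        (hf b hb).2 (hf c hc).2
      omega
  refine hcarry.induction _ Q (fun _ _ h => h) fun hQ => ?_
  rw [List.head?_eq_some_head hQ, Option.mem_some_iff] at ha
  rw [ha]

theorem exists_mem_le_lt_add_of_isChain {Q : List (ℕ × ℕ)}
    (hchain : Q.IsChain fun a b => b.1 ≤ a.1 + a.2) {t : ℕ}
    (hhead : ∃ a ∈ Q.head?, a.1 ≤ t) (hlast : ∃ b ∈ Q.getLast?, t < b.1 + b.2) :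
    ∃ p ∈ Q, p.1 ≤ t ∧ t < p.1 + p.2 := by
  obtain ⟨a, ha, hat⟩ := hhead
  obtain ⟨b, hb, htb⟩ := hlast
  have hQ : Q ≠ [] := by rintro rfl; simp at ha
  rw [List.head?_eq_some_head hQ, Option.mem_some_iff] at ha
  rw [List.getLast?_eq_some_getLast hQ, Option.mem_some_iff] at hb
  have hcarry : Q.IsChain fun a c =>
      (c.1 ≤ t → ∃ p ∈ Q, p.1 ≤ t ∧ t < p.1 + p.2) → a.1 ≤ t → ∃ p ∈ Q, p.1 ≤ t ∧ t < p.1 + p.2 :=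
    hchain.imp_of_mem_imp fun a c ha _ hac hc hat => by
      by_cases h : t < a.1 + a.2
      · exact ⟨a, ha, hat, h⟩
      · exact hc (by omega)
  refine hcarry.backwards_induction _ Q (fun _ _ h => h) (fun _ hbt => ?_) _
    (List.head_mem hQ) (ha ▸ hat)
  exact ⟨_, List.getLast_mem hQ, hbt, hb ▸ htb⟩

theorem eq_of_forall_substr_eq {x y : List α} (hxy : x.length = y.length) {Q : List (ℕ × ℕ)}
    (hchain : Q.IsChain fun a b => b.1 ≤ a.1 + a.2) (hhead : ∃ a ∈ Q.head?, a.1 = 0)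
    (hlast : ∃ b ∈ Q.getLast?, b.1 + b.2 = x.length)
    (hQ : ∀ p ∈ Q, substr x p.1 p.2 = substr y p.1 p.2) : x = y := by
  refine List.ext_getElem? fun t => ?_
  rcases lt_or_ge t x.length with ht | ht
  · obtain ⟨a, ha, ha0⟩ := hhead
    obtain ⟨b, hb, hbx⟩ := hlast
    have hbt : t < b.1 + b.2 := by omega
    obtain ⟨p, hp, hpt, htp⟩ :=
      exists_mem_le_lt_add_of_isChain hchain ⟨a, ha, ha0.trans_le t.zero_le⟩ ⟨b, hb, hbt⟩
    have hk : t - p.1 < p.2 := by omega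
    have := congrArg (·[t - p.1]?) (hQ p hp)
    rwa [getElem?_substr _ hk, getElem?_substr _ hk, Nat.add_sub_cancel' hpt] at this
  · rw [List.getElem?_eq_none ht, List.getElem?_eq_none (hxy ▸ ht)]

end Chains

theorem IsTrace.exists_substr_eq_of_mem {α : Type*} {Lmin Lover : ℕ} {x : List α}
    {T : Multiset (List α)} (h : IsTrace Lmin Lover x T) {s : List α} (hs : s ∈ T) :
    ∃ i, i + s.length ≤ x.length ∧ substr x i s.length = s := by
  obtain ⟨P, -, hP, -, -, -, rfl⟩ := h
  obtain ⟨p, hp, rfl⟩ := List.mem_map.1 (Multiset.mem_coe.1 hs)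
  rw [length_substr (hP p hp).2]
  exact ⟨p.1, (hP p hp).2, rfl⟩

theorem repeat_free_unique_reconstruction_general
    {α : Type*} (n Lmin Lover : ℕ) (hLmin : Lover < Lmin)
    (x y : List α) (hx : x.length = n) (hy : y.length = n)
    (hrf : RepeatFree Lover x)
    (T : Multiset (List α))
    (hTx : T ∈ traceSpectrum Lmin Lover x) (hTy : T ∈ traceSpectrum Lmin Lover y) :
    x = y := by
  obtain ⟨Q, -, hQ, hchain, ⟨a, ha, ha0⟩, ⟨b, hb, hbn⟩, rfl⟩ := hTy
  have hmatch : ∀ p ∈ Q, ∃ r, r + p.2 ≤ x.length ∧ substr y p.1 p.2 = substr x r p.2 := by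
    intro p hp
    obtain ⟨r, hr, hsub⟩ :=
      hTx.exists_substr_eq_of_mem (Multiset.mem_coe.2 (List.mem_map_of_mem hp))
    rw [length_substr (hQ p hp).2] at hr hsub
    exact ⟨r, hr, hsub.symm⟩
  choose! f hf using hmatch
  have hshift := hrf.add_eq_add_of_isChain f (fun p hp => (hQ p hp).1.trans' hLmin.le)
    (hchain.imp fun _ _ h => ⟨h.1.le, h.2⟩) hf ha
  have hb_mem := List.mem_of_mem_getLast? hb
  have hfa : f a = 0 := by
    have := hshift b hb_mem
    have := (hf b hb_mem).1
    omega
  refine (eq_of_forall_substr_eq (by omega) (hchain.imp fun _ _ h => by omega) ⟨a, ha, ha0⟩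
    ⟨b, hb, hbn⟩ fun p hp => ?_).symm
  have := hshift p hp
  rw [(hf p hp).2, show f p = p.1 by omega]

theorem repeat_free_unique_reconstruction
    {α : Type*} [Fintype α] {q : ℕ} (hcard : Fintype.card α = q) (hq : 2 ≤ q)
    (n Lmin Lover : ℕ) (hn : Lmin ≤ n) (hLmin : Lover < Lmin) (hLover : 1 ≤ Lover)
    (x y : List α) (hx : x.length = n) (hy : y.length = n)
    (hrf : RepeatFree Lover x)
    (T : Multiset (List α))
    (hTx : T ∈ traceSpectrum Lmin Lover x) (hTy : T ∈ traceSpectrum Lmin Lover y) :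
    x = y :=
  repeat_free_unique_reconstruction_general n Lmin Lover hLmin x y hx hy hrf T hTx hTy
end

section
/- Let Σ be a finite alphabet of size q ≥ 2, and let n, L_min, L_over be positive integers with n ≥ L_min > L_over ≥ 1 and (L_min − L_over) dividing (n − L_min). Then every (L_min, L_over)-trace code C ⊆ Σ^n satisfies |C| ≤ binom(⌈n/(L_min − L_over)⌉ + q^{L_min}, q^{L_min}). -/
/-- `C` is an `(Lmin, Lover)`-trace code: distinct codewords have disjoint trace spectra. -/
def IsTraceCode {α : Type*} (Lmin Lover : ℕ) (C : Set (List α)) : Prop :=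
  ∀ x₁ ∈ C, ∀ x₂ ∈ C, x₁ ≠ x₂ →
    traceSpectrum Lmin Lover x₁ ∩ traceSpectrum Lmin Lover x₂ = ∅

/-!
Cut each word of length `n = Lmin + d m`, `d = Lmin - Lover`, into the `m + 1` windows of
length `Lmin` starting at `0, d, …, m d`: consecutive windows overlap in exactly `Lover`
symbols, so this multiset is a trace. In a trace code distinct codewords have distinct such
traces, so the code injects into the multisets of size `m + 1` over the `q ^ Lmin` words of
length `Lmin`, of which there are `multichoose (q ^ Lmin) (m + 1)`, and
`m + 1 ≤ ⌈n / d⌉`.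
-/

theorem Nat.multichoose_le_choose_add (N : ℕ) {k K : ℕ} (hk : k ≤ K) :
    N.multichoose k ≤ (K + N).choose N :=
  calc N.multichoose k = (N + k - 1).choose k := Nat.multichoose_eq N k
    _ ≤ (N + k).choose k := Nat.choose_le_choose k (by omega)
    _ = (k + N).choose N := by rw [add_comm, Nat.choose_symm_add]
    _ ≤ (K + N).choose N := Nat.choose_le_choose N (by omega)

theorem Finset.card_le_multichoose_of_injOn {β γ : Type*} {C : Finset γ} {s : Finset β}
    {k : ℕ} (f : γ → Multiset β) (hf : Set.InjOn f C)
    (hf_card : ∀ x ∈ C, Multiset.card (f x) = k) (hf_mem : ∀ x ∈ C, ∀ w ∈ f x, w ∈ s) :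
    C.card ≤ s.card.multichoose k := by
  classical
  have hsub : C.image f ⊆ Finset.univ.image (fun t : Sym s k => t.1.map Subtype.val) := by
    intro T hT
    obtain ⟨x, hx, rfl⟩ := Finset.mem_image.1 hT
    obtain ⟨t, ht⟩ : ∃ t : Multiset s, t.map Subtype.val = f x :=
      CanLift.prf (f x) (hf_mem x hx)
    refine Finset.mem_image.2 ⟨⟨t, ?_⟩, Finset.mem_univ _, ht⟩
    rw [← Multiset.card_map Subtype.val, ht, hf_card x hx]
  calc C.card = (C.image f).card := (Finset.card_image_of_injOn hf).symm
    _ ≤ (Finset.univ : Finset (Sym s k)).card :=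
      (Finset.card_le_card hsub).trans Finset.card_image_le
    _ = s.card.multichoose k := by
      rw [Finset.card_univ, Sym.card_sym_eq_multichoose, Fintype.card_coe]

theorem exists_finset_words_card (α : Type*) [Fintype α] (ℓ : ℕ) :
    ∃ s : Finset (List α),
      s.card = Fintype.card α ^ ℓ ∧ ∀ w : List α, w.length = ℓ → w ∈ s :=
  ⟨Finset.univ.map ⟨List.Vector.toList, List.Vector.toList_injective⟩,
    by rw [Finset.card_map, Finset.card_univ, card_vector],
    fun w hw => Finset.mem_map.2 ⟨⟨w, hw⟩, Finset.mem_univ _, rfl⟩⟩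

section WindowTrace

variable {α : Type*}

def windowTrace (ℓ d m : ℕ) (x : List α) : Multiset (List α) :=
  ((List.range (m + 1)).map fun i => substr x (i * d) ℓ : List (List α))

theorem card_windowTrace (ℓ d m : ℕ) (x : List α) :
    Multiset.card (windowTrace ℓ d m x) = m + 1 := by
  simp [windowTrace]

theorem length_of_mem_windowTrace {ℓ d m : ℕ} {x w : List α} (hx : ℓ + d * m ≤ x.length)
    (hw : w ∈ windowTrace ℓ d m x) : w.length = ℓ := by
  obtain ⟨i, hi, rfl⟩ := List.mem_map.1 (Multiset.mem_coe.1 hw)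
  have : i * d ≤ d * m := by
    rw [mul_comm d]
    exact Nat.mul_le_mul_right d (Nat.lt_succ_iff.1 (List.mem_range.1 hi))
  exact length_substr (by omega)

theorem isTrace_windowTrace {Lmin Lover d m : ℕ} {x : List α} (hd : 0 < d)
    (hover : Lover + d ≤ Lmin) (hx : x.length = Lmin + d * m) :
    IsTrace Lmin Lover x (windowTrace Lmin d m x) := by
  refine ⟨(List.range (m + 1)).map fun i => (i * d, Lmin), by simp, ?_, ?_, ?_, ?_, ?_⟩
  · simp only [List.mem_map, List.mem_range]
    rintro _ ⟨i, hi, rfl⟩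
    have : i * d ≤ d * m := by rw [mul_comm d]; exact Nat.mul_le_mul_right d (by omega)
    exact ⟨le_rfl, by omega⟩
  · rw [List.Chain', List.isChain_map, List.isChain_range_succ]
    intro i _
    simp only [Nat.succ_mul]
    omega
  · exact ⟨(0, Lmin), by simp [List.range_succ_eq_map], rfl⟩
  · refine ⟨(m * d, Lmin), by simp [List.range_succ], ?_⟩
    rw [hx, mul_comm d]
    omega
  · simp only [windowTrace, List.map_map]
    rfl

end WindowTrace

theorem IsTraceCode.injOn {α : Type*} {Lmin Lover : ℕ} {C : Set (List α)}
    (hC : IsTraceCode Lmin Lover C) (f : List α → Multiset (List α))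
    (hf : ∀ x ∈ C, IsTrace Lmin Lover x (f x)) : Set.InjOn f C := by
  intro x₁ h₁ x₂ h₂ heq
  by_contra hne
  have hmem : f x₁ ∈ traceSpectrum Lmin Lover x₁ ∩ traceSpectrum Lmin Lover x₂ :=
    ⟨hf x₁ h₁, heq ▸ hf x₂ h₂⟩
  rw [hC x₁ h₁ x₂ h₂ hne] at hmem
  exact hmem

theorem trace_code_size_bound_general
    {α : Type*} [Fintype α] {q : ℕ} (hcard : Fintype.card α = q)
    (n Lmin Lover : ℕ) (hn : Lmin ≤ n) (hLmin : Lover < Lmin)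
    (hdvd : (Lmin - Lover) ∣ (n - Lmin))
    (C : Finset (List α)) (hlen : ∀ x ∈ C, x.length = n)
    (hcode : IsTraceCode Lmin Lover (↑C : Set (List α))) :
    C.card ≤ Nat.choose ((n + (Lmin - Lover) - 1) / (Lmin - Lover) + q ^ Lmin) (q ^ Lmin) := by
  set d := Lmin - Lover
  obtain ⟨m, hm⟩ := hdvd
  have hx : ∀ x ∈ C, x.length = Lmin + d * m := fun x hxC => by
    have := hlen x hxC
    omega
  obtain ⟨s, hs_card, hs_mem⟩ := exists_finset_words_card α Lmin
  have hm_le : m + 1 ≤ (n + d - 1) / d := by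
    rw [Nat.le_div_iff_mul_le (by omega), add_mul, mul_comm]
    omega
  calc C.card ≤ s.card.multichoose (m + 1) :=
        Finset.card_le_multichoose_of_injOn (windowTrace Lmin d m)
          (hcode.injOn _ fun x hxC => isTrace_windowTrace (by omega) (by omega) (hx x hxC))
          (fun x _ => card_windowTrace Lmin d m x)
          (fun x hxC w hw => hs_mem w (length_of_mem_windowTrace (hx x hxC).ge hw))
    _ ≤ _ := by
      rw [hs_card, hcard]
      exact Nat.multichoose_le_choose_add _ hm_le

theorem trace_code_size_bound
    {α : Type*} [Fintype α] {q : ℕ} (hcard : Fintype.card α = q) (hq : 2 ≤ q)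
    (n Lmin Lover : ℕ) (hn : Lmin ≤ n) (hLmin : Lover < Lmin) (hLover : 1 ≤ Lover)
    (hdvd : (Lmin - Lover) ∣ (n - Lmin))
    (C : Finset (List α)) (hlen : ∀ x ∈ C, x.length = n)
    (hcode : IsTraceCode Lmin Lover (↑C : Set (List α))) :
    C.card ≤ Nat.choose ((n + (Lmin - Lover) - 1) / (Lmin - Lover) + q ^ Lmin) (q ^ Lmin) :=
  trace_code_size_bound_general hcard n Lmin Lover hn hLmin hdvd C hlen hcode
end
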